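/- arXiv:2008.11276 — 3 statements merged into one kernel-verified Lean document; each statement's English description precedes it below -/
import Mathlib

section
/- Let U : ℝ → ℝ be four times continuously differentiable and let p be the unique quadratic polynomial whose averages over the intervals [x_{i−1} − h/2, x_{i−1} + h/2], [x_i − h/2, x_i + h/2], [x_{i+1} − h/2, x_{i+1} + h/2] (with x_{i±1} = x_i ± Δx) agree with those of U. Then p''(x_i) differs from U''(x_i) by O(Δx²): there is a constant C depending only on sup|U⁗| with |p'' − U''(x_i)| ≤ C Δx². -/
/-!
The combination `∫ f` over the right tooth plus the left tooth minus twice the middle one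
annihilates odd powers of `x - xᵢ` and sends `(x - xᵢ)²` to `2 h Δx²`. Applied to the matching
quadratic `p` it gives `p'' h Δx²`; applied to the cubic Taylor polynomial of `U` at `xᵢ` it gives
`U''(xᵢ) h Δx²`. As `p` and `U` have the same tooth integrals, the two differ by the combination of
the Taylor remainder, which is at most `4 h · M (3Δx/2)⁴ / 4!` because `h ≤ Δx` keeps the teeth
within `3Δx/2` of `xᵢ`; dividing by `h Δx²` gives the claim.
-/

open Finset Set Nat intervalIntegral

theorem abs_sub_taylorWithinEval_univ_le {f : ℝ → ℝ} {n : ℕ} {M : ℝ}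
    (hf : ContDiff ℝ (n + 1) f) (hM : ∀ x, |iteratedDeriv (n + 1) f x| ≤ M) (a x : ℝ) :
    |f x - taylorWithinEval f n univ a x| ≤ M * |x - a| ^ (n + 1) / (n + 1)! := by
  rcases eq_or_ne a x with rfl | hax
  · simp
  obtain ⟨y, -, hy⟩ := taylor_mean_remainder_lagrange_iteratedDeriv hax hf.contDiffOn
  have htaylor : taylorWithinEval f n (uIcc a x) a x = taylorWithinEval f n univ a x := by
    simp only [taylor_within_apply, iteratedDerivWithin_univ]
    refine sum_congr rfl fun k hk => ?_
    rw [iteratedDerivWithin_eq_iteratedDeriv (uniqueDiffOn_uIcc hax)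
      (hf.contDiffAt.of_le ?_) left_mem_uIcc]
    exact_mod_cast (mem_range.1 hk).le
  rw [← htaylor, hy, abs_div, abs_mul, abs_pow, abs_of_pos (by positivity : (0 : ℝ) < (n + 1)!)]
  gcongr
  exact hM y

theorem taylorWithinEval_three_univ (f : ℝ → ℝ) (a x : ℝ) :
    taylorWithinEval f 3 univ a x = f a + deriv f a * (x - a) + deriv (deriv f) a / 2 * (x - a) ^ 2
      + iteratedDeriv 3 f a / 6 * (x - a) ^ 3 := by
  simp only [taylor_within_apply, iteratedDerivWithin_univ, sum_range_succ, range_zero,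
    sum_empty, iteratedDeriv_zero, iteratedDeriv_succ, smul_eq_mul]
  norm_num [Nat.factorial]
  ring

theorem integral_cubic (a₀ a₁ a₂ a₃ c a b : ℝ) :
    ∫ x in a..b, (a₀ + a₁ * (x - c) + a₂ * (x - c) ^ 2 + a₃ * (x - c) ^ 3) =
      a₀ * (b - a) + a₁ / 2 * ((b - c) ^ 2 - (a - c) ^ 2) + a₂ / 3 * ((b - c) ^ 3 - (a - c) ^ 3)
        + a₃ / 4 * ((b - c) ^ 4 - (a - c) ^ 4) := by
  have hF (x : ℝ) : HasDerivAt (fun x => a₀ * (x - c) + a₁ / 2 * (x - c) ^ 2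
      + a₂ / 3 * (x - c) ^ 3 + a₃ / 4 * (x - c) ^ 4)
      (a₀ + a₁ * (x - c) + a₂ * (x - c) ^ 2 + a₃ * (x - c) ^ 3) x := by
    have hx := (hasDerivAt_id' x).sub_const c
    refine ((((hx.const_mul a₀).add ((hx.pow 2).const_mul (a₁ / 2))).add
      ((hx.pow 3).const_mul (a₂ / 3))).add ((hx.pow 4).const_mul (a₃ / 4))).congr_deriv ?_
    push_cast
    ring
  rw [integral_eq_sub_of_hasDerivAt (fun x _ => hF x)
    (Continuous.intervalIntegrable (by fun_prop) _ _)]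
  ring

theorem deriv_deriv_of_eq_quadratic {p : ℝ → ℝ} {c₀ c₁ c₂ : ℝ}
    (hp : ∀ x, p x = c₀ + c₁ * x + c₂ * x ^ 2) (x : ℝ) : deriv (deriv p) x = 2 * c₂ := by
  have hp' (y : ℝ) : HasDerivAt p (c₁ + 2 * c₂ * y) y := by
    rw [funext hp]
    refine ((((hasDerivAt_id' y).const_mul c₁).const_add c₀).add
      ((hasDerivAt_pow 2 y).const_mul c₂)).congr_deriv ?_
    push_cast
    ring
  rw [funext fun y => (hp' y).deriv]
  exact ((((hasDerivAt_id' x).const_mul (2 * c₂)).const_add c₁).congr_deriv (mul_one _)).deriv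

noncomputable def toothIntegral (f : ℝ → ℝ) (m h : ℝ) : ℝ :=
  ∫ x in (m - h / 2)..(m + h / 2), f x

noncomputable def toothSecondDiff (f : ℝ → ℝ) (c Δx h : ℝ) : ℝ :=
  toothIntegral f (c + Δx) h + toothIntegral f (c - Δx) h - 2 * toothIntegral f c h

theorem toothSecondDiff_congr {f g : ℝ → ℝ} {c Δx h : ℝ}
    (hfg : ∀ j : ℤ, j = -1 ∨ j = 0 ∨ j = 1 →
      toothIntegral f (c + j * Δx) h = toothIntegral g (c + j * Δx) h) :
    toothSecondDiff f c Δx h = toothSecondDiff g c Δx h := by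
  have hl := hfg (-1) (by norm_num)
  have h₀ := hfg 0 (by norm_num)
  have hr := hfg 1 (by norm_num)
  simp only [Int.cast_neg, Int.cast_one, Int.cast_zero, neg_mul, one_mul, zero_mul, add_zero,
    ← sub_eq_add_neg] at hl h₀ hr
  simp only [toothSecondDiff, hl, h₀, hr]

theorem toothSecondDiff_sub {f g : ℝ → ℝ} (hf : Continuous f) (hg : Continuous g) (c Δx h : ℝ) :
    toothSecondDiff (f - g) c Δx h = toothSecondDiff f c Δx h - toothSecondDiff g c Δx h := by
  simp only [toothSecondDiff, toothIntegral, Pi.sub_apply,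
    integral_sub (hf.intervalIntegrable _ _) (hg.intervalIntegrable _ _)]
  ring

theorem toothSecondDiff_cubic {q : ℝ → ℝ} {a₀ a₁ a₂ a₃ c : ℝ}
    (hq : ∀ x, q x = a₀ + a₁ * (x - c) + a₂ * (x - c) ^ 2 + a₃ * (x - c) ^ 3) (Δx h : ℝ) :
    toothSecondDiff q c Δx h = 2 * a₂ * h * Δx ^ 2 := by
  simp only [toothSecondDiff, toothIntegral, hq, integral_cubic]
  ring

theorem abs_toothSecondDiff_le {f : ℝ → ℝ} {c Δx h K : ℝ} (hΔx : 0 ≤ Δx) (hh : 0 ≤ h)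
    (hf : ∀ x ∈ Icc (c - Δx - h / 2) (c + Δx + h / 2), |f x| ≤ K) :
    |toothSecondDiff f c Δx h| ≤ 4 * K * h := by
  have tooth : ∀ m ∈ Icc (c - Δx) (c + Δx), |toothIntegral f m h| ≤ K * h := by
    intro m hm
    have := norm_integral_le_of_norm_le_const (a := m - h / 2) (b := m + h / 2) (f := f) (C := K)
      fun x hx => by
        rw [uIoc_of_le (by linarith)] at hx
        exact hf x ⟨by linarith [hx.1, hm.1], by linarith [hx.2, hm.2]⟩
    simpa [toothIntegral, abs_of_nonneg hh] using this
  have hr := abs_le.1 (tooth (c + Δx) ⟨by linarith, le_rfl⟩)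
  have hl := abs_le.1 (tooth (c - Δx) ⟨le_rfl, by linarith⟩)
  have h₀ := abs_le.1 (tooth c ⟨by linarith, by linarith⟩)
  rw [toothSecondDiff, abs_le]
  constructor <;> linarith [hr.1, hr.2, hl.1, hl.2, h₀.1, h₀.2]

theorem abs_toothSecondDiff_sub_le {U : ℝ → ℝ} {M c Δx h : ℝ} (hU : ContDiff ℝ 4 U)
    (hM : ∀ x, |iteratedDeriv 4 U x| ≤ M) (hh : 0 ≤ h) (hhΔx : h ≤ Δx) :
    |toothSecondDiff U c Δx h - deriv (deriv U) c * h * Δx ^ 2| ≤ 27 / 32 * M * h * Δx ^ 4 := by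
  have hT := taylorWithinEval_three_univ U c
  set T := taylorWithinEval U 3 univ c
  have hTc : Continuous T := by
    rw [funext hT]
    fun_prop
  have hM₀ : 0 ≤ M := (abs_nonneg _).trans (hM c)
  have hremainder : ∀ x ∈ Icc (c - Δx - h / 2) (c + Δx + h / 2),
      |(U - T) x| ≤ M * (3 / 2 * Δx) ^ 4 / 24 := by
    intro x hx
    have hxc : |x - c| ≤ 3 / 2 * Δx := abs_le.2 ⟨by linarith [hx.1], by linarith [hx.2]⟩
    calc |(U - T) x| ≤ M * |x - c| ^ 4 / (3 + 1)! :=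
          abs_sub_taylorWithinEval_univ_le (by exact_mod_cast hU) hM c x
      _ ≤ M * (3 / 2 * Δx) ^ 4 / 24 := by
          norm_num [Nat.factorial]
          gcongr
  have hsplit : toothSecondDiff U c Δx h - deriv (deriv U) c * h * Δx ^ 2 =
      toothSecondDiff (U - T) c Δx h := by
    rw [toothSecondDiff_sub hU.continuous hTc, toothSecondDiff_cubic hT]
    ring
  calc |toothSecondDiff U c Δx h - deriv (deriv U) c * h * Δx ^ 2|
      ≤ 4 * (M * (3 / 2 * Δx) ^ 4 / 24) * h := by
        rw [hsplit]
        exact abs_toothSecondDiff_le (hh.trans hhΔx) hh hremainder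
    _ = 27 / 32 * M * h * Δx ^ 4 := by ring

/-- The quadratic polynomial matching the box averages of a smooth field `U`
over three neighboring teeth has second derivative within `O(Δx²)` of `U''`,
with a constant depending only on the bound `M` on the fourth derivative. -/
theorem gap_tooth_quadratic_second_derivative
    (M : ℝ) :
    ∃ C : ℝ, 0 ≤ C ∧
      ∀ (U : ℝ → ℝ), ContDiff ℝ 4 U →
        (∀ x, |iteratedDeriv 4 U x| ≤ M) →
        ∀ (Δx h xi : ℝ), 0 < h → h ≤ Δx →
          ∀ p : ℝ → ℝ,
            (∃ c0 c1 c2 : ℝ, ∀ x, p x = c0 + c1 * x + c2 * x^2) →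
            (∀ j : ℤ, j = -1 ∨ j = 0 ∨ j = 1 →
              ∫ x in (xi + j * Δx - h/2)..(xi + j * Δx + h/2), p x
                = ∫ x in (xi + j * Δx - h/2)..(xi + j * Δx + h/2), U x) →
            |deriv (deriv p) xi - deriv (deriv U) xi| ≤ C * Δx^2 := by
  refine ⟨27 / 32 * |M|, by positivity, ?_⟩
  rintro U hU hM Δx h xi hh hhΔx p ⟨c₀, c₁, c₂, hp⟩ hmatch
  have hpU : toothSecondDiff p xi Δx h = toothSecondDiff U xi Δx h := toothSecondDiff_congr hmatch
  have hp₂ : toothSecondDiff p xi Δx h = deriv (deriv p) xi * h * Δx ^ 2 := by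
    rw [deriv_deriv_of_eq_quadratic hp, toothSecondDiff_cubic (a₀ := c₀ + c₁ * xi + c₂ * xi ^ 2)
      (a₁ := c₁ + 2 * c₂ * xi) (a₂ := c₂) (a₃ := 0) fun x => by rw [hp]; ring]
  have hfactor : toothSecondDiff U xi Δx h - deriv (deriv U) xi * h * Δx ^ 2 =
      (deriv (deriv p) xi - deriv (deriv U) xi) * (h * Δx ^ 2) := by
    rw [← hpU, hp₂]
    ring
  have hpos : 0 < h * Δx ^ 2 := mul_pos hh (pow_pos (hh.trans_le hhΔx) 2)
  have hU₂ := abs_toothSecondDiff_sub_le (c := xi) hU hM hh.le hhΔx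
  rw [hfactor, abs_mul, abs_of_pos hpos] at hU₂
  rw [abs_of_nonneg ((abs_nonneg _).trans (hM xi))]
  exact le_of_mul_le_mul_right (hU₂.trans_eq (by ring)) hpos
end

section
/- Let a : ℝ → ℝ be measurable, 1-periodic, with 0 < α ≤ a ≤ β. Define the quadratic form Q(v) = ∫₀¹ a(y)|v'(y) − 1|² dy over 1-periodic H¹ functions v. Then the infimum of Q equals the harmonic mean a* = (∫₀¹ 1/a dy)⁻¹, attained by the cell-problem solution χ. -/
/-!
For `h = 1 - v'` (so `∫₀¹ h = 1`) and `m = ∫₀¹ 1/a`, completing the square gives the pointwise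
bound `a h² ≥ 2 h / m - 1 / (m² a)`, with equality exactly at `h = 1 / (m a)`. Integrating,
`∫₀¹ a h² ≥ 2 / m - 1 / m = 1 / m`, and the corrector `χ' = 1 - 1 / (m a)` attains the bound.
-/

open MeasureTheory Set

lemma two_mul_mul_sub_sq_div_le_mul_sq {A : ℝ} (hA : 0 < A) (c t : ℝ) :
    2 * c * t - c ^ 2 / A ≤ A * t ^ 2 := by
  have hsq : A * t ^ 2 - (2 * c * t - c ^ 2 / A) = (A * t - c) ^ 2 / A := by
    field_simp
    ring
  have : 0 ≤ (A * t - c) ^ 2 / A := by positivity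
  linarith

lemma mul_sq_mul_inv_self {A : ℝ} (c : ℝ) (hA : A ≠ 0) : A * (c * A⁻¹) ^ 2 = c ^ 2 * A⁻¹ := by
  field_simp

lemma sq_inv_mul_self (m : ℝ) : m⁻¹ ^ 2 * m = m⁻¹ := by
  rw [sq, ← inv_inv m, inv_inv m⁻¹, mul_self_mul_inv]

section WeightedSquare

variable {X : Type*} [MeasurableSpace X] {μ : Measure X} {a f : X → ℝ}

lemma integrable_inv_of_le [IsFiniteMeasure μ] {α : ℝ} (hα : 0 < α) (ha_meas : AEMeasurable a μ)
    (ha : ∀ x, α ≤ a x) : Integrable (fun x => (a x)⁻¹) μ := by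
  refine Integrable.of_bound ha_meas.inv.aestronglyMeasurable α⁻¹ (ae_of_all _ fun x => ?_)
  rw [Real.norm_of_nonneg (inv_pos.2 (hα.trans_le (ha x))).le]
  exact inv_anti₀ hα (ha x)

lemma Integrable.of_mul_sq [IsFiniteMeasure μ] {α : ℝ} (hα : 0 < α) (ha : ∀ x, α ≤ a x)
    (hf : AEStronglyMeasurable f μ) (haf : Integrable (fun x => a x * f x ^ 2) μ) :
    Integrable f μ := by
  have hf_sq : Integrable (fun x => f x ^ 2) μ := by
    refine (haf.const_mul α⁻¹).mono' (hf.pow 2) (ae_of_all _ fun x => ?_)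
    rw [Real.norm_of_nonneg (sq_nonneg _), inv_mul_eq_div, le_div_iff₀' hα]
    exact mul_le_mul_of_nonneg_right (ha x) (sq_nonneg _)
  exact ((memLp_two_iff_integrable_sq hf).2 hf_sq).integrable one_le_two

lemma inv_integral_inv_le_integral_mul_sq (ha : ∀ x, 0 < a x)
    (ha_inv : Integrable (fun x => (a x)⁻¹) μ) (hf : Integrable f μ)
    (haf : Integrable (fun x => a x * f x ^ 2) μ) (hf_one : ∫ x, f x ∂μ = 1) :
    (∫ x, (a x)⁻¹ ∂μ)⁻¹ ≤ ∫ x, a x * f x ^ 2 ∂μ := by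
  set m := ∫ x, (a x)⁻¹ ∂μ
  have hpt : ∀ x, 2 * m⁻¹ * f x - m⁻¹ ^ 2 * (a x)⁻¹ ≤ a x * f x ^ 2 := fun x => by
    simpa only [div_eq_mul_inv] using two_mul_mul_sub_sq_div_le_mul_sq (ha x) m⁻¹ (f x)
  calc m⁻¹ = 2 * m⁻¹ * 1 - m⁻¹ ^ 2 * m := by
        rw [sq_inv_mul_self]
        ring
    _ = ∫ x, (2 * m⁻¹ * f x - m⁻¹ ^ 2 * (a x)⁻¹) ∂μ := by
        rw [integral_sub (hf.const_mul _) (ha_inv.const_mul _), integral_const_mul,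
          integral_const_mul, hf_one]
    _ ≤ ∫ x, a x * f x ^ 2 ∂μ :=
        integral_mono ((hf.const_mul _).sub (ha_inv.const_mul _)) haf hpt

lemma integral_inv_integral_inv_mul_inv (hm : ∫ x, (a x)⁻¹ ∂μ ≠ 0) :
    ∫ x, (∫ y, (a y)⁻¹ ∂μ)⁻¹ * (a x)⁻¹ ∂μ = 1 := by
  rw [integral_const_mul, inv_mul_cancel₀ hm]

lemma integral_mul_sq_inv_integral_inv_mul_inv (ha : ∀ x, a x ≠ 0) :
    ∫ x, a x * ((∫ y, (a y)⁻¹ ∂μ)⁻¹ * (a x)⁻¹) ^ 2 ∂μ = (∫ x, (a x)⁻¹ ∂μ)⁻¹ := by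
  simp only [mul_sq_mul_inv_self _ (ha _), integral_const_mul, sq_inv_mul_self]

variable [IsProbabilityMeasure μ]

lemma inv_integral_inv_le_integral_mul_sub_one_sq {g : X → ℝ} {α : ℝ} (hα : 0 < α)
    (ha_meas : AEMeasurable a μ) (ha : ∀ x, α ≤ a x) (hg_meas : AEStronglyMeasurable g μ)
    (hg_mean : ∫ x, g x ∂μ = 0) (hag : Integrable (fun x => a x * (g x - 1) ^ 2) μ) :
    (∫ x, (a x)⁻¹ ∂μ)⁻¹ ≤ ∫ x, a x * (g x - 1) ^ 2 ∂μ := by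
  simp only [sub_sq_comm _ (1 : ℝ)] at hag ⊢
  have hg_sub : Integrable (fun x => 1 - g x) μ :=
    Integrable.of_mul_sq hα ha (aestronglyMeasurable_const.sub hg_meas) hag
  have hg : Integrable g μ :=
    ((integrable_const 1).sub hg_sub).congr (ae_of_all _ fun x => sub_sub_cancel 1 (g x))
  have hg_one : ∫ x, (1 - g x) ∂μ = 1 := by
    simp [integral_sub (integrable_const 1) hg, hg_mean]
  exact inv_integral_inv_le_integral_mul_sq (fun x => hα.trans_le (ha x))
    (integrable_inv_of_le hα ha_meas ha) hg_sub hag hg_one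

lemma integral_one_sub_inv_integral_inv_mul_inv (ha_inv : Integrable (fun x => (a x)⁻¹) μ)
    (hm : ∫ x, (a x)⁻¹ ∂μ ≠ 0) : ∫ x, (1 - (∫ y, (a y)⁻¹ ∂μ)⁻¹ * (a x)⁻¹) ∂μ = 0 := by
  rw [integral_sub (integrable_const 1) (ha_inv.const_mul _),
    integral_inv_integral_inv_mul_inv hm]
  simp

end WeightedSquare

theorem effective_diffusivity_variational_general
    (a : ℝ → ℝ) (α : ℝ) (hα : 0 < α)
    (ha_meas : Measurable a) (ha_per : Function.Periodic a 1)
    (ha_lb : ∀ y, α ≤ a y) :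
    IsLeast
      {q : ℝ | ∃ g : ℝ → ℝ, Measurable g ∧ Function.Periodic g 1 ∧
        (∫ y in (0:ℝ)..1, g y) = 0 ∧
        IntervalIntegrable (fun y => a y * (g y - 1)^2) MeasureTheory.volume 0 1 ∧
        q = ∫ y in (0:ℝ)..1, a y * (g y - 1)^2}
      ((∫ y in (0:ℝ)..1, (a y)⁻¹)⁻¹) := by
  have : IsProbabilityMeasure (volume.restrict (Ioc (0 : ℝ) 1)) := ⟨by simp⟩
  have ha_pos : ∀ y, 0 < a y := fun y => hα.trans_le (ha_lb y)
  have ha_inv : IntegrableOn (fun y => (a y)⁻¹) (Ioc 0 1) :=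
    integrable_inv_of_le hα ha_meas.aemeasurable ha_lb
  have hm : 0 < ∫ y in (0:ℝ)..1, (a y)⁻¹ :=
    intervalIntegral.intervalIntegral_pos_of_pos_on
      ((intervalIntegrable_iff_integrableOn_Ioc_of_le zero_le_one).2 ha_inv)
      (fun y _ => inv_pos.2 (ha_pos y)) one_pos
  simp only [intervalIntegral.integral_of_le zero_le_one,
    intervalIntegrable_iff_integrableOn_Ioc_of_le zero_le_one] at hm ⊢
  set m := ∫ y in Ioc 0 1, (a y)⁻¹
  refine ⟨⟨fun y => 1 - m⁻¹ * (a y)⁻¹, by fun_prop, fun y => by simp [ha_per y],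
    integral_one_sub_inv_integral_inv_mul_inv ha_inv hm.ne', ?_, ?_⟩, ?_⟩
  · simp only [sub_sub_cancel_left, neg_sq, mul_sq_mul_inv_self _ (ha_pos _).ne']
    exact ha_inv.const_mul _
  · simp only [sub_sub_cancel_left, neg_sq]
    exact (integral_mul_sq_inv_integral_inv_mul_inv fun y => (ha_pos y).ne').symm
  · rintro q ⟨g, hg_meas, -, hg_mean, hg_int, rfl⟩
    exact inv_integral_inv_le_integral_mul_sub_one_sq hα ha_meas.aemeasurable ha_lb
      hg_meas.aestronglyMeasurable hg_mean hg_int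

/-- Variational characterization of the 1D effective diffusivity: the minimum
of `∫₀¹ a |v' − 1|²` over 1-periodic `H¹` functions `v` (encoded by their
periodic, mean-zero derivatives `g = v'`) equals the harmonic mean
`a* = (∫₀¹ 1/a)⁻¹`, and is attained (by the cell-problem corrector). -/
theorem effective_diffusivity_variational
    (a : ℝ → ℝ) (α β : ℝ) (hα : 0 < α)
    (ha_meas : Measurable a) (ha_per : Function.Periodic a 1)
    (ha_lb : ∀ y, α ≤ a y) (ha_ub : ∀ y, a y ≤ β) :
    IsLeast
      {q : ℝ | ∃ g : ℝ → ℝ, Measurable g ∧ Function.Periodic g 1 ∧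
        (∫ y in (0:ℝ)..1, g y) = 0 ∧
        IntervalIntegrable (fun y => a y * (g y - 1)^2) MeasureTheory.volume 0 1 ∧
        q = ∫ y in (0:ℝ)..1, a y * (g y - 1)^2}
      ((∫ y in (0:ℝ)..1, (a y)⁻¹)⁻¹) :=
  effective_diffusivity_variational_general a α hα ha_meas ha_per ha_lb
end

section
/- Let a : ℝ → ℝ be continuous, 1-periodic, a ≥ α > 0, and fix ε > 0 with 1/ε ∈ ℕ. For the steady-state two-point boundary value problem d/dx(a(x/ε) u') = 0 on [0,1] with u(0) = 0, u(1) = 1, the unique solution is u_ε(x) = a* ∫₀ˣ dy/a(y/ε), where a* = (∫₀¹ 1/a dy)⁻¹, and u_ε converges uniformly on [0,1] to the homogenized solution u_h(x) = x as ε → 0, with |u_ε(x) − u_h(x)| ≤ Cε for a constant C depending only on α and sup a. -/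
/-!
Constant flux `a(x/ε) u' = c` gives `u = c ∫₀ˣ dy / a(y/ε)` by quadrature. When `1/ε = n` the
interval `[0,1]` consists of `n` periods of `y ↦ 1 / a(y/ε)`, so `∫₀¹ dy / a(y/ε) = ∫₀¹ 1/a = 1/a*`
and the condition `u(1) = 1` forces `c = a*`.

For the error, `u_ε(x) - x = a* (∫₀ˣ g - x ∫₀¹ 1/a)` with `g(y) = 1 / a(y/ε)`. Splitting `[0, x]`
into whole periods of `g` and a remainder of length `< ε`, the whole periods are matched exactly
by the linear term, and on the remainder both terms lie in `[0, ε/α]`; so the error is at most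
`a* ε / α`.
-/

open MeasureTheory intervalIntegral

namespace Function.Periodic

variable {f : ℝ → ℝ} {T : ℝ}

theorem intervalIntegral_eq_fract_add_floor_smul (hf : Periodic f T) (hT : T ≠ 0)
    (hint : ∀ t₁ t₂, IntervalIntegrable f volume t₁ t₂) (t : ℝ) :
    ∫ x in 0..t, f x = (∫ x in 0..Int.fract (t / T) * T, f x) + ⌊t / T⌋ • ∫ x in 0..T, f x := by
  conv_lhs => rw [← Int.fract_div_mul_self_add_zsmul_eq T t hT,
    ← integral_add_adjacent_intervals (hint 0 (Int.fract (t / T) * T)) (hint _ _)]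
  rw [hf.intervalIntegral_add_zsmul_eq _ _ hint, hf.intervalIntegral_add_eq _ 0, zero_add]

theorem abs_intervalIntegral_sub_div_mul_le (hf : Periodic f T) (hT : 0 < T)
    (hint : IntervalIntegrable f volume 0 T) {M : ℝ} (hf0 : ∀ x, 0 ≤ f x) (hfM : ∀ x, f x ≤ M)
    (t : ℝ) : |(∫ x in 0..t, f x) - t / T * ∫ x in 0..T, f x| ≤ T * M := by
  have hint' := hf.intervalIntegrable₀ hT.ne' hint
  have hbounds : ∀ s, 0 ≤ s → 0 ≤ ∫ x in 0..s, f x ∧ ∫ x in 0..s, f x ≤ s * M := fun s hs =>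
    ⟨integral_nonneg hs fun x _ => hf0 x, by
      simpa [mul_comm] using integral_mono_on hs (hint' 0 s) intervalIntegrable_const
        fun x _ => hfM x⟩
  set θ := Int.fract (t / T)
  have hθ0 : 0 ≤ θ := Int.fract_nonneg _
  have hθ1 : θ < 1 := Int.fract_lt_one _
  have hrem := hbounds (θ * T) (mul_nonneg hθ0 hT.le)
  have hperiod := hbounds T hT.le
  have hdiff : (∫ x in 0..t, f x) - t / T * ∫ x in 0..T, f x
      = (∫ x in 0..θ * T, f x) - θ * ∫ x in 0..T, f x := by
    rw [hf.intervalIntegral_eq_fract_add_floor_smul hT.ne' hint' t, zsmul_eq_mul]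
    linear_combination (-∫ x in 0..T, f x) * (Int.fract_add_floor (t / T)).symm
  rw [mul_assoc] at hrem
  rw [hdiff]
  calc _ ≤ θ * (T * M) := abs_sub_le_of_nonneg_of_le hrem.1 hrem.2
          (mul_nonneg hθ0 hperiod.1) (mul_le_mul_of_nonneg_left hperiod.2 hθ0)
    _ ≤ T * M := mul_le_of_le_one_left (hperiod.1.trans hperiod.2) hθ1.le

theorem abs_mul_intervalIntegral_comp_div_sub_le (hf : Periodic f 1)
    (hint : IntervalIntegrable f volume 0 1) {M : ℝ} (hf0 : ∀ x, 0 ≤ f x) (hfM : ∀ x, f x ≤ M)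
    {A : ℝ} (hA : 0 ≤ A) (hA_mean : A * ∫ y in 0..1, f y = 1) {ε : ℝ} (hε : 0 < ε) (x : ℝ) :
    |A * (∫ y in 0..x, f (y / ε)) - x| ≤ A * M * ε := by
  have hbound := hf.abs_intervalIntegral_sub_div_mul_le one_pos hint hf0 hfM (x / ε)
  rw [div_one, one_mul] at hbound
  have hrescale : A * (∫ y in 0..x, f (y / ε)) - x
      = A * ε * ((∫ y in 0..x / ε, f y) - x / ε * ∫ y in 0..1, f y) := by
    rw [integral_comp_div _ hε.ne', zero_div, smul_eq_mul]
    field_simp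
    linear_combination x * hA_mean
  calc |A * (∫ y in 0..x, f (y / ε)) - x|
      = A * ε * |(∫ y in 0..x / ε, f y) - x / ε * ∫ y in 0..1, f y| := by
        rw [hrescale, abs_mul, abs_of_nonneg (mul_nonneg hA hε.le)]
    _ ≤ A * ε * M := mul_le_mul_of_nonneg_left hbound (mul_nonneg hA hε.le)
    _ = A * M * ε := mul_right_comm _ _ _

theorem intervalIntegral_comp_mul_natCast (hf : Periodic f 1)
    (hint : IntervalIntegrable f volume 0 1) {n : ℕ} (hn : 0 < n) :
    ∫ y in 0..1, f (y * n) = ∫ y in 0..1, f y := by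
  have hn' : (n : ℝ) ≠ 0 := by positivity
  have hperiods := hf.intervalIntegral_add_zsmul_eq n 0 (hf.intervalIntegrable₀ one_ne_zero hint)
  simp only [zero_add, zsmul_eq_mul, Int.cast_natCast, mul_one] at hperiods
  rw [integral_comp_mul_right _ hn', zero_mul, one_mul, hperiods, smul_eq_mul,
    inv_mul_cancel_left₀ hn']

end Function.Periodic

theorem eq_mul_intervalIntegral_inv_of_mul_deriv_eq_const {b u : ℝ → ℝ} {c : ℝ}
    (hb : Continuous b) (hb0 : ∀ x, b x ≠ 0) (hu : Differentiable ℝ u) (hu0 : u 0 = 0)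
    (hflux : ∀ x, b x * deriv u x = c) (x : ℝ) :
    u x = c * ∫ y in 0..x, (b y)⁻¹ := by
  have hderiv : deriv u = fun y => c * (b y)⁻¹ := by
    funext y
    rw [← hflux y, mul_comm (b y), mul_inv_cancel_right₀ (hb0 y)]
  have hFTC := integral_deriv_eq_sub (fun y _ => hu y) (a := 0) (b := x)
    (by rw [hderiv]; exact (continuous_const.mul (hb.inv₀ hb0)).intervalIntegrable 0 x)
  simp only [hderiv, intervalIntegral.integral_const_mul, hu0, sub_zero] at hFTC
  exact hFTC.symm

/-- Steady-state homogenization: the two-point boundary-value problem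
`d/dx (a(x/ε) u') = 0`, `u(0)=0`, `u(1)=1` has the unique solution
`u_ε(x) = a* ∫₀ˣ dy/a(y/ε)`, and `u_ε → x` uniformly with error `O(ε)`,
with a constant depending only on the bounds of `a`. -/
theorem steady_state_homogenization
    (a : ℝ → ℝ) (α : ℝ) (hα : 0 < α)
    (ha_cont : Continuous a) (ha_per : Function.Periodic a 1)
    (ha_lb : ∀ y, α ≤ a y)
    (astar : ℝ) (hastar : astar = (∫ y in (0:ℝ)..1, (a y)⁻¹)⁻¹)
    (uε : ℝ → ℝ → ℝ)
    (huε : ∀ ε x, uε ε x = astar * ∫ y in (0:ℝ)..x, (a (y/ε))⁻¹) :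
    -- uniqueness: any solution of the BVP coincides with uε
    (∀ ε : ℝ, (∃ n : ℕ, 0 < n ∧ ε = 1/(n:ℝ)) →
      ∀ u : ℝ → ℝ, Differentiable ℝ u → u 0 = 0 → u 1 = 1 →
        (∃ c : ℝ, ∀ x, a (x/ε) * deriv u x = c) →
        ∀ x ∈ Set.Icc (0:ℝ) 1, u x = uε ε x) ∧
    -- uniform O(ε) convergence to the homogenized solution u_h(x) = x
    ∃ C : ℝ, 0 ≤ C ∧
      ∀ ε : ℝ, (∃ n : ℕ, 0 < n ∧ ε = 1/(n:ℝ)) →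
        ∀ x ∈ Set.Icc (0:ℝ) 1, |uε ε x - x| ≤ C * ε := by
  have ha_pos : ∀ y, 0 < a y := fun y => hα.trans_le (ha_lb y)
  have hinv_per : Function.Periodic (fun y => (a y)⁻¹) 1 := fun y => by simp only [ha_per y]
  have hinv_int : IntervalIntegrable (fun y => (a y)⁻¹) volume 0 1 :=
    (ha_cont.inv₀ fun y => (ha_pos y).ne').intervalIntegrable 0 1
  have hinv_le : ∀ y, (a y)⁻¹ ≤ α⁻¹ := fun y => inv_anti₀ hα (ha_lb y)
  have hI_pos : 0 < ∫ y in (0:ℝ)..1, (a y)⁻¹ :=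
    intervalIntegral_pos_of_pos hinv_int (fun y => inv_pos.2 (ha_pos y)) one_pos
  have hastar_pos : 0 < astar := hastar ▸ inv_pos.2 hI_pos
  have hastar_mul : astar * ∫ y in (0:ℝ)..1, (a y)⁻¹ = 1 := by
    rw [hastar, inv_mul_cancel₀ hI_pos.ne']
  refine ⟨?_, astar * α⁻¹, by positivity, ?_⟩
  · rintro ε ⟨n, hn, rfl⟩ u hu hu0 hu1 ⟨c, hflux⟩ x -
    have hsol := eq_mul_intervalIntegral_inv_of_mul_deriv_eq_const (by fun_prop)
      (fun y => (ha_pos _).ne') hu hu0 hflux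
    have hc : c * ∫ y in (0:ℝ)..1, (a y)⁻¹ = 1 := by
      have h1 := hsol 1
      simp only [hu1, one_div, div_inv_eq_mul] at h1
      rwa [hinv_per.intervalIntegral_comp_mul_natCast hinv_int hn, eq_comm] at h1
    rw [hsol, huε, mul_right_cancel₀ hI_pos.ne' (hc.trans hastar_mul.symm)]
  · rintro ε ⟨n, hn, hεn⟩ x -
    rw [huε]
    exact hinv_per.abs_mul_intervalIntegral_comp_div_sub_le hinv_int
      (fun y => (inv_pos.2 (ha_pos y)).le) hinv_le hastar_pos.le hastar_mul
      (hεn ▸ by positivity) x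
end
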